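/- arXiv:2509.13963 — 6 statements merged into one kernel-verified Lean document; each statement's English description precedes it below -/
import Mathlib

section
/- Let (A, ∗) be an anti-Zinbiel algebra, i.e., a vector space with bilinear map ∗ satisfying x∗(y∗z) = -(x∗y+y∗x)∗z = -(y∗z+z∗y)∗x = z∗(y∗x) and z∗(x∗y) = x∗(z∗y). Then the operation x⋆y = x∗y + y∗x makes A a commutative associative algebra. -/
/-!
The anti-Zinbiel identities make `x ∗ (y ∗ z)` a symmetric function of `x, y, z`, while
`(x ⋆ y) ∗ z = -x ∗ (y ∗ z)` and `z ∗ (x ⋆ y) = 2 x ∗ (y ∗ z)`. Hence `(x ⋆ y) ⋆ z = x ∗ (y ∗ z)`,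
and associativity of `⋆` follows from its commutativity and the symmetry.
-/

/-- An anti-Zinbiel algebra structure on a vector space `A`. -/
def IsAntiZinbiel {k A : Type*} [Field k] [AddCommGroup A] [Module k A]
    (s : A →ₗ[k] A →ₗ[k] A) : Prop :=
  (∀ x y z, s x (s y z) = - s (s x y + s y x) z) ∧
  (∀ x y z, s x (s y z) = - s (s y z + s z y) x) ∧
  (∀ x y z, s x (s y z) = s z (s y x)) ∧
  (∀ x y z, s z (s x y) = s x (s z y))

namespace IsAntiZinbiel

variable {k A : Type*} [Field k] [AddCommGroup A] [Module k A] {s : A →ₗ[k] A →ₗ[k] A}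

theorem mul_mul_comm (hs : IsAntiZinbiel s) (x y z : A) : s x (s y z) = s x (s z y) := by
  rw [← hs.2.2.2 x y z, hs.2.2.1 z x y, hs.2.2.2 x z y]

theorem mul_mul_left_comm (hs : IsAntiZinbiel s) (x y z : A) :
    s x (s y z) = s y (s x z) :=
  hs.2.2.2 y z x

theorem mul_mul_rotate (hs : IsAntiZinbiel s) (x y z : A) : s y (s z x) = s x (s y z) := by
  rw [hs.mul_mul_left_comm, hs.mul_mul_comm, hs.mul_mul_left_comm, hs.mul_mul_comm]

theorem star_mul (hs : IsAntiZinbiel s) (x y z : A) :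
    s (s x y + s y x) z = -s x (s y z) := by
  rw [hs.1 x y z, neg_neg]

theorem mul_star (hs : IsAntiZinbiel s) (x y z : A) :
    s z (s x y + s y x) = 2 • s x (s y z) := by
  rw [map_add, hs.mul_mul_comm z y x, hs.mul_mul_rotate y z x, hs.mul_mul_rotate x y z,
    two_nsmul]

theorem star_star (hs : IsAntiZinbiel s) (x y z : A) :
    s (s x y + s y x) z + s z (s x y + s y x) = s x (s y z) := by
  rw [hs.star_mul, hs.mul_star, two_nsmul]
  abel

end IsAntiZinbiel

/-- the operation `x ⋆ y = x ∗ y + y ∗ x` on an anti-Zinbiel algebra is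
commutative and associative. -/
theorem antiZinbiel_star_comm_assoc {k A : Type*} [Field k] [AddCommGroup A] [Module k A]
    (s : A →ₗ[k] A →ₗ[k] A) (h : IsAntiZinbiel s) :
    (∀ x y : A, s x y + s y x = s y x + s x y) ∧
    (∀ x y z : A,
      s (s x y + s y x) z + s z (s x y + s y x) =
        s x (s y z + s z y) + s (s y z + s z y) x) := by
  refine ⟨fun x y => add_comm _ _, fun x y z => ?_⟩
  rw [h.star_star, add_comm (s x _), h.star_star, h.mul_mul_rotate x y z]
end

section
/- Let (A, ∗, ∘) be an anti-pre-Poisson algebra. Define x⋆y = x∗y + y∗x and [x,y] = x∘y - y∘x. Then (A, ⋆, [,]) is a Poisson algebra; in particular the Leibniz rule [z, x⋆y] = [z,x]⋆y + x⋆[z,y] holds for all x,y,z ∈ A. -/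
/-- An anti-pre-Lie algebra structure on a vector space `A`. -/
def IsAntiPreLie {k A : Type*} [Field k] [AddCommGroup A] [Module k A]
    (c : A →ₗ[k] A →ₗ[k] A) : Prop :=
  (∀ x y z, c x (c y z) - c y (c x z) = c (c y x - c x y) z) ∧
  (∀ x y z, c (c x y - c y x) z + c (c y z - c z y) x + c (c z x - c x z) y = 0)

/-- An anti-pre-Poisson algebra structure `(A, ∗, ∘)`:
an anti-Zinbiel operation `s`, an anti-pre-Lie operation `c`, and the
three compatibility conditions. -/
def IsAntiPrePoisson {k A : Type*} [Field k] [AddCommGroup A] [Module k A]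
    (s c : A →ₗ[k] A →ₗ[k] A) : Prop :=
  IsAntiZinbiel s ∧ IsAntiPreLie c ∧
  (∀ x y z, s (c x y - c y x) z = s y (c x z) - c x (s y z)) ∧
  (∀ x y z, c (s x y + s y x) z = - s x (c y z) - s y (c x z)) ∧
  (∀ x y z, c z (s x y + s y x) + s x (c y z) + s y (c x z) = s x (c z y) + s y (c z x))

/-!
Write `x ⋆ y = x ∗ y + y ∗ x` and `[x, y] = x ∘ y - y ∘ x`. The anti-Zinbiel identities
give `(x ⋆ y) ∗ z = (y ⋆ z) ∗ x` and `z ∗ (x ⋆ y) = x ∗ (y ⋆ z)`, whose sum is the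
associativity of `⋆`. The anti-pre-Lie identity makes the cyclic sum of `z ∘ [x, y]`
vanish, so the Jacobi identity reduces to the cyclic condition on `[x, y] ∘ z`. For the
Leibniz rule, the compatibility conditions express both `[z, x ⋆ y]` and
`[z, x] ⋆ y + x ⋆ [z, y]` as `x ∗ (z ∘ y) + y ∗ (z ∘ x)`.
-/

def IsAntiPrePoissonCompatible {k A : Type*} [Field k] [AddCommGroup A] [Module k A]
    (s c : A →ₗ[k] A →ₗ[k] A) : Prop :=
  (∀ x y z, s (c x y - c y x) z = s y (c x z) - c x (s y z)) ∧
  (∀ x y z, c (s x y + s y x) z = - s x (c y z) - s y (c x z)) ∧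
  (∀ x y z, c z (s x y + s y x) + s x (c y z) + s y (c x z) = s x (c z y) + s y (c z x))

section

variable {k A : Type*} [Field k] [AddCommGroup A] [Module k A] {s c : A →ₗ[k] A →ₗ[k] A}

namespace IsAntiZinbiel

variable (h : IsAntiZinbiel s)
include h

theorem anticomm_apply_eq_anticomm_apply (x y z : A) :
    s (s x y + s y x) z = s (s y z + s z y) x :=
  neg_injective <| (h.1 x y z).symm.trans (h.2.1 x y z)

theorem apply_anticomm_eq_apply_anticomm (x y z : A) :
    s z (s x y + s y x) = s x (s y z + s z y) := by
  rw [map_add, map_add, h.2.2.2 x y z, h.2.2.1 x y z, add_comm]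

theorem anticomm_assoc (x y z : A) :
    s (s x y + s y x) z + s z (s x y + s y x) =
      s x (s y z + s z y) + s (s y z + s z y) x := by
  rw [h.anticomm_apply_eq_anticomm_apply, h.apply_anticomm_eq_apply_anticomm, add_comm]

end IsAntiZinbiel

namespace IsAntiPreLie

variable (h : IsAntiPreLie c)
include h

theorem apply_commutator_cyclic_sum (x y z : A) :
    c z (c x y - c y x) + c x (c y z - c z y) + c y (c z x - c x z) = 0 := by
  linear_combination (norm := (simp only [map_sub, LinearMap.sub_apply]; abel))
    h.1 z x y + h.1 x y z + h.1 y z x - h.2 x y z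

theorem commutator_jacobi (x y z : A) :
    (c (c x y - c y x) z - c z (c x y - c y x)) +
    (c (c y z - c z y) x - c x (c y z - c z y)) +
    (c (c z x - c x z) y - c y (c z x - c x z)) = 0 := by
  linear_combination (norm := (simp only [map_sub, LinearMap.sub_apply]; abel))
    h.2 x y z - h.apply_commutator_cyclic_sum x y z

end IsAntiPreLie

theorem IsAntiPrePoisson.compatible (h : IsAntiPrePoisson s c) : IsAntiPrePoissonCompatible s c :=
  h.2.2

namespace IsAntiPrePoissonCompatible

variable (h : IsAntiPrePoissonCompatible s c)
include h

theorem apply_anticomm (x y z : A) :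
    c z (s x y + s y x) = s x (c z y - c y z) + s y (c z x - c x z) := by
  linear_combination (norm := (simp only [map_add, map_sub]; abel))
    h.2.2 x y z

theorem commutator_anticomm (x y z : A) :
    c z (s x y + s y x) - c (s x y + s y x) z = s x (c z y) + s y (c z x) := by
  linear_combination (norm := (simp only [map_add, LinearMap.add_apply]; abel))
    h.2.2 x y z - h.2.1 x y z

theorem commutator_apply_add_commutator_apply (x y z : A) :
    s (c z x - c x z) y + s (c z y - c y z) x =
      s x (c z y) + s y (c z x) - c z (s x y + s y x) := by
  rw [h.1 z x y, h.1 z y x, map_add]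
  abel

theorem leibniz (x y z : A) :
    c z (s x y + s y x) - c (s x y + s y x) z =
      (s (c z x - c x z) y + s y (c z x - c x z)) +
        (s x (c z y - c y z) + s (c z y - c y z) x) := by
  linear_combination
    (norm := (simp only [map_add, map_sub, LinearMap.add_apply, LinearMap.sub_apply]; abel))
    h.commutator_anticomm x y z
    - h.commutator_apply_add_commutator_apply x y z + h.apply_anticomm x y z

end IsAntiPrePoissonCompatible

end

/-- the sub-adjacent operations `x⋆y = x∗y + y∗x` and `[x,y] = x∘y - y∘x`
of an anti-pre-Poisson algebra form a Poisson algebra; in particular the Leibniz rule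
`[z, x⋆y] = [z,x]⋆y + x⋆[z,y]` holds. -/
theorem antiPrePoisson_subadjacent_poisson {k A : Type*} [Field k] [AddCommGroup A] [Module k A]
    (s c : A →ₗ[k] A →ₗ[k] A) (h : IsAntiPrePoisson s c) :
    (∀ x y : A, s x y + s y x = s y x + s x y) ∧
    (∀ x y z : A,
      s (s x y + s y x) z + s z (s x y + s y x) =
        s x (s y z + s z y) + s (s y z + s z y) x) ∧
    (∀ x y : A, c x y - c y x = -(c y x - c x y)) ∧
    (∀ x y z : A,
      (c (c x y - c y x) z - c z (c x y - c y x)) +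
      (c (c y z - c z y) x - c x (c y z - c z y)) +
      (c (c z x - c x z) y - c y (c z x - c x z)) = 0) ∧
    (∀ x y z : A,
      c z (s x y + s y x) - c (s x y + s y x) z =
        (s (c z x - c x z) y + s y (c z x - c x z)) +
        (s x (c z y - c y z) + s (c z y - c y z) x)) := by
  exact ⟨fun x y => add_comm _ _, h.1.anticomm_assoc, fun x y => (neg_sub _ _).symm,
    h.2.1.commutator_jacobi, h.compatible.leibniz⟩
end

section
/- Let (A, ∗) be an anti-Zinbiel algebra and ω a symmetric bilinear form on A that is invariant, i.e., ω(x∗y, z) = -ω(x, y⋆z) where y⋆z = y∗z + z∗y. Then ω is a commutative Connes cocycle on the associated commutative associative algebra (A, ⋆), i.e., ω(x⋆y, z) + ω(y⋆z, x) + ω(z⋆x, y) = 0 for all x, y, z ∈ A. -/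
theorem form_symm_prod_eq_neg_cyclic {R A M : Type*} [CommSemiring R] [AddCommGroup A]
    [Module R A] [AddCommGroup M] [Module R M]
    {s : A →ₗ[R] A →ₗ[R] A} {ω : A →ₗ[R] A →ₗ[R] M}
    (hsym : ∀ x y : A, ω x y = ω y x)
    (hinv : ∀ x y z : A, ω (s x y) z = - ω x (s y z + s z y)) (x y z : A) :
    ω (s x y + s y x) z = - ω (s y z + s z y) x - ω (s z x + s x z) y := by
  calc ω (s x y + s y x) z = ω (s x y) z + ω (s y x) z := by
        rw [map_add, LinearMap.add_apply]
    _ = - ω x (s y z + s z y) - ω y (s x z + s z x) := by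
        rw [hinv, hinv, sub_eq_add_neg]
    _ = - ω (s y z + s z y) x - ω (s z x + s x z) y := by
        rw [hsym x, hsym y, add_comm (s x z)]

theorem invariant_form_connes_cocycle_general {k A : Type*} [Field k] [AddCommGroup A] [Module k A]
    (s : A →ₗ[k] A →ₗ[k] A)
    (ω : A →ₗ[k] A →ₗ[k] k)
    (hsym : ∀ x y : A, ω x y = ω y x)
    (hinv : ∀ x y z : A, ω (s x y) z = - ω x (s y z + s z y)) :
    ∀ x y z : A,
      ω (s x y + s y x) z + ω (s y z + s z y) x + ω (s z x + s x z) y = 0 := by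
  intro x y z
  rw [form_symm_prod_eq_neg_cyclic hsym hinv]
  ring

/-- a symmetric invariant bilinear form on an anti-Zinbiel algebra is a
commutative Connes cocycle on the associated commutative associative algebra `(A, ⋆)`. -/
theorem invariant_form_connes_cocycle {k A : Type*} [Field k] [AddCommGroup A] [Module k A]
    (s : A →ₗ[k] A →ₗ[k] A) (h : IsAntiZinbiel s)
    (ω : A →ₗ[k] A →ₗ[k] k)
    (hsym : ∀ x y : A, ω x y = ω y x)
    (hinv : ∀ x y z : A, ω (s x y) z = - ω x (s y z + s z y)) :
    ∀ x y z : A,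
      ω (s x y + s y x) z + ω (s y z + s z y) x + ω (s z x + s x z) y = 0 :=
  invariant_form_connes_cocycle_general s ω hsym hinv
end

section
/- Let (A, ∗, ∘) be an anti-pre-Poisson algebra. Then (A, L_∗, R_∗, L_∘, R_∘) is a representation of (A, ∗, ∘), where L_∗(x)y = x∗y, R_∗(x)y = y∗x, L_∘(x)y = x∘y, R_∘(x)y = y∘x (the regular representation). -/
/-- A representation `(V, l, r)` of an anti-Zinbiel algebra `(A, ∗)` (multiplication in
`Module.End` is composition; `l⋆ = l + r`). -/
def IsAZRep {k A V : Type*} [Field k] [AddCommGroup A] [Module k A]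
    [AddCommGroup V] [Module k V]
    (s : A →ₗ[k] A →ₗ[k] A) (l r : A → Module.End k V) : Prop :=
  IsLinearMap k l ∧ IsLinearMap k r ∧
  (∀ x y, l x * l y = - l (s x y + s y x)) ∧
  (∀ x y, l x * l y = - (r x * (l y + r y))) ∧
  (∀ x y, l x * l y = r (s y x)) ∧
  (∀ x y, l x * r y = - (r y * (l x + r x))) ∧
  (∀ x y, l x * r y = - (r x * (l y + r y))) ∧
  (∀ x y, l x * r y = l y * r x) ∧
  (∀ x y, r (s x y) = l x * r y) ∧
  (∀ x y, l y * l x = l x * l y)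

/-- A representation `(V, l, r)` of an anti-pre-Lie algebra `(A, ∘)`. -/
def IsAPLRep {k A V : Type*} [Field k] [AddCommGroup A] [Module k A]
    [AddCommGroup V] [Module k V]
    (c : A →ₗ[k] A →ₗ[k] A) (l r : A → Module.End k V) : Prop :=
  IsLinearMap k l ∧ IsLinearMap k r ∧
  (∀ x y, l (c y x) - l (c x y) = l x * l y - l y * l x) ∧
  (∀ x y, r (c x y) = l x * r y + r y * l x - r y * r x) ∧
  (∀ x y, l (c y x) - l (c x y) = r x * l y - r y * l x - r x * r y + r y * r x)

/-- A representation `(V, ls, rs, lc, rc)` of an anti-pre-Poisson algebra `(A, ∗, ∘)`. -/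
def IsAPPRep {k A V : Type*} [Field k] [AddCommGroup A] [Module k A]
    [AddCommGroup V] [Module k V]
    (s c : A →ₗ[k] A →ₗ[k] A) (ls rs lc rc : A → Module.End k V) : Prop :=
  IsAZRep s ls rs ∧ IsAPLRep c lc rc ∧
  (∀ x y, ls (c x y - c y x) = ls y * lc x - lc x * ls y) ∧
  (∀ x y, lc (s x y + s y x) = - (ls x * lc y) - ls y * lc x) ∧
  (∀ x y, rs x * (lc y - rc y) = rc (s y x) - ls y * rc x) ∧
  (∀ x y, rc x * (ls y + rs y) = - rs (c y x) - ls y * rc x) ∧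
  (∀ x y, rs x * (lc y - rc y) = rs (c y x) - lc y * rs x) ∧
  (∀ x y, rc (s x y + s y x) + ls x * lc y + ls y * lc x = ls x * rc y + ls y * rc x) ∧
  (∀ x y, lc x * (ls y + rs y) + rs (c y x) + ls y * rc x = ls y * lc x + rs (c x y))

/-! Every defining identity of a representation, evaluated at `z ∈ A` for the regular
representation, is an instance of one of the algebra axioms at a permutation of `x, y, z`
(or the difference of two such instances). -/

section RegularRepresentation

variable {k A : Type*} [Field k] [AddCommGroup A] [Module k A] {s c : A →ₗ[k] A →ₗ[k] A}

theorem IsAntiZinbiel.isAZRep_regular (hs : IsAntiZinbiel s) :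
    IsAZRep (V := A) s (fun x => s x) (fun x => s.flip x) := by
  obtain ⟨sym_left, sym_right, -, -⟩ := hs
  simp only [map_add, LinearMap.add_apply] at sym_left sym_right
  refine ⟨s.isLinear, s.flip.isLinear, ?_, ?_, ?_, ?_, ?_, ?_, ?_, ?_⟩ <;>
    intro x y <;> ext z <;>
    simp only [Module.End.mul_apply, LinearMap.add_apply, LinearMap.neg_apply,
      LinearMap.flip_apply, map_add]
  · linear_combination (norm := abel) sym_left x y z
  · linear_combination (norm := abel) sym_right x y z
  · linear_combination (norm := abel) sym_right x y z - sym_left z y x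
  · linear_combination (norm := abel) sym_left x z y
  · linear_combination (norm := abel) sym_right x z y
  · linear_combination (norm := abel) sym_right x z y - sym_left y z x
  · linear_combination (norm := abel) sym_left z x y - sym_left x z y
  · linear_combination (norm := abel) sym_left y x z - sym_left x y z

theorem IsAntiPreLie.isAPLRep_regular (hc : IsAntiPreLie c) :
    IsAPLRep (V := A) c (fun x => c x) (fun x => c.flip x) := by
  obtain ⟨left_comm, cyclic⟩ := hc
  simp only [map_sub, LinearMap.sub_apply] at left_comm cyclic
  refine ⟨c.isLinear, c.flip.isLinear, ?_, ?_, ?_⟩ <;>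
    intro x y <;> ext z <;>
    simp only [Module.End.mul_apply, LinearMap.add_apply, LinearMap.sub_apply,
      LinearMap.flip_apply]
  · linear_combination (norm := abel) - left_comm x y z
  · linear_combination (norm := abel) - left_comm x z y
  · linear_combination (norm := abel) - cyclic x y z

end RegularRepresentation

/-- the regular representation `(A, L_∗, R_∗, L_∘, R_∘)` of an
anti-pre-Poisson algebra `(A, ∗, ∘)` is a representation. -/
theorem regular_rep_antiPrePoisson {k A : Type*} [Field k] [AddCommGroup A] [Module k A]
    (s c : A →ₗ[k] A →ₗ[k] A) (h : IsAntiPrePoisson s c) :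
    IsAPPRep (V := A) s c
      (fun x => s x) (fun x => s.flip x) (fun x => c x) (fun x => c.flip x) := by
  obtain ⟨hs, hc, comm_star, sym_circ, circ_sym⟩ := h
  simp only [map_add, map_sub, LinearMap.add_apply, LinearMap.sub_apply]
    at comm_star sym_circ circ_sym
  refine ⟨hs.isAZRep_regular, hc.isAPLRep_regular, ?_, ?_, ?_, ?_, ?_, ?_, ?_⟩ <;>
    intro x y <;> ext z <;>
    simp only [Module.End.mul_apply, LinearMap.add_apply, LinearMap.sub_apply,
      LinearMap.neg_apply, LinearMap.flip_apply, map_add, map_sub]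
  · linear_combination (norm := abel) comm_star x y z
  · linear_combination (norm := abel) sym_circ x y z
  · linear_combination (norm := abel) - comm_star z y x
  · linear_combination (norm := abel) sym_circ y z x
  · linear_combination (norm := abel) comm_star y z x
  · linear_combination (norm := abel) circ_sym x y z
  · linear_combination (norm := abel) circ_sym y z x
end

section
/- Let (A, ∗, ∘) be an anti-pre-Poisson algebra and r ∈ A⊗A be skew-symmetric. Then r is a solution of the APP-YBE in (A, ∗, ∘) if and only if T_r is an O-operator of the sub-adjacent Poisson algebra (A, ⋆, [,]) associated to the representation (A*, L_∗*, -L_∘*). -/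
open scoped TensorProduct

/-- For `r = ∑ i, a i ⊗ b i ∈ A ⊗ A`, the associated map `T_r : A* → A`,
`⟨T_r ζ, η⟩ = ⟨r, ζ ⊗ η⟩`; concretely `T_r ζ = ∑ i, ζ (a i) • b i`. -/
def Tmap {k A ι : Type*} [Field k] [AddCommGroup A] [Module k A] [Fintype ι]
    (a b : ι → A) (ζ : Module.Dual k A) : A :=
  ∑ i, ζ (a i) • b i


section Aux
variable {k A M : Type*} [Field k] [AddCommGroup A] [Module k A] [AddCommGroup M] [Module k M]

noncomputable def ctr (ζ : Module.Dual k A) : A ⊗[k] M →ₗ[k] M :=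
  TensorProduct.lift ((LinearMap.lsmul k M).comp ζ)

@[simp] lemma ctr_tmul (ζ : Module.Dual k A) (x : A) (m : M) :
    ctr ζ (x ⊗ₜ[k] m) = ζ x • m := rfl

lemma ctr_sep {u : A ⊗[k] M} (h : ∀ ζ : Module.Dual k A, ctr ζ u = 0) : u = 0 := by
  classical
  let b := Module.Basis.ofVectorSpace k A
  let e : A ⊗[k] M ≃ₗ[k] (Module.Basis.ofVectorSpaceIndex k A →₀ M) :=
    (TensorProduct.congr b.repr (LinearEquiv.refl k M)).trans
      (TensorProduct.finsuppScalarLeft k M _)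
  have key : ∀ (i : Module.Basis.ofVectorSpaceIndex k A) (u : A ⊗[k] M),
      e u i = ctr (b.coord i) u := by
    intro i u
    induction u using TensorProduct.induction_on with
    | zero => simp
    | tmul x m =>
        simp [e, TensorProduct.finsuppScalarLeft_apply_tmul_apply, Module.Basis.coord_apply]
    | add x y hx hy => simp [map_add, Finsupp.add_apply, hx, hy]
  have : e u = 0 := by
    ext i
    rw [key i u, h]
    rfl
  simpa using congrArg e.symm this
end Aux


section Skew
variable {k A ι : Type*} [Field k] [AddCommGroup A] [Module k A] [Fintype ι]
  {a b : ι → A}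

lemma skewsc (hskew : (∑ i, b i ⊗ₜ[k] a i) = -(∑ i, a i ⊗ₜ[k] b i))
    (φ ψ : Module.Dual k A) :
    ∑ i, φ (b i) * ψ (a i) = -∑ i, φ (a i) * ψ (b i) := by
  have := congrArg (TensorProduct.lift ((LinearMap.mul k k).compl₁₂ φ ψ)) hskew
  simpa using this

lemma sPart (s : A →ₗ[k] A →ₗ[k] A)
    (hskew : (∑ i, b i ⊗ₜ[k] a i) = -(∑ i, a i ⊗ₜ[k] b i)) :
    ((∑ i, ∑ j, a i ⊗ₜ[k] (s (b i) (a j)) ⊗ₜ[k] b j) -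
      (∑ i, ∑ j, (s (a i) (a j)) ⊗ₜ[k] b i ⊗ₜ[k] b j) +
      (∑ i, ∑ j, a i ⊗ₜ[k] a j ⊗ₜ[k] (s (b i) (b j) + s (b j) (b i))) = 0)
    ↔ ∀ ζ η : Module.Dual k A,
      s (Tmap a b ζ) (Tmap a b η) + s (Tmap a b η) (Tmap a b ζ) =
        Tmap a b (-((s (Tmap a b ζ)).dualMap η) + -((s (Tmap a b η)).dualMap ζ)) := by
  have key : ∀ ζ η : Module.Dual k A,
      ctr η (ctr ζ (TensorProduct.assoc k A A A ((∑ i, ∑ j, a i ⊗ₜ[k] (s (b i) (a j)) ⊗ₜ[k] b j) -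
        (∑ i, ∑ j, (s (a i) (a j)) ⊗ₜ[k] b i ⊗ₜ[k] b j) +
        (∑ i, ∑ j, a i ⊗ₜ[k] a j ⊗ₜ[k] (s (b i) (b j) + s (b j) (b i)))))) =
      (s (Tmap a b ζ) (Tmap a b η) + s (Tmap a b η) (Tmap a b ζ)) -
        Tmap a b (-((s (Tmap a b ζ)).dualMap η) + -((s (Tmap a b η)).dualMap ζ)) := by
    intro ζ η
    have hL : ctr η (ctr ζ (TensorProduct.assoc k A A A ((∑ i, ∑ j, a i ⊗ₜ[k] (s (b i) (a j)) ⊗ₜ[k] b j) -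
        (∑ i, ∑ j, (s (a i) (a j)) ⊗ₜ[k] b i ⊗ₜ[k] b j) +
        (∑ i, ∑ j, a i ⊗ₜ[k] a j ⊗ₜ[k] (s (b i) (b j) + s (b j) (b i)))))) =
        (∑ i, ∑ j, (ζ (a i) * η (s (b i) (a j))) • b j) -
        (∑ i, ∑ j, (ζ (s (a i) (a j)) * η (b i)) • b j) +
        (∑ i, ∑ j, (ζ (a i) * η (a j)) • (s (b i) (b j) + s (b j) (b i))) := by
      simp only [map_sub, map_add, map_sum, TensorProduct.assoc_tmul, ctr_tmul, LinearMap.map_smul, smul_smul]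
    have hR1 : s (Tmap a b ζ) (Tmap a b η) + s (Tmap a b η) (Tmap a b ζ) =
        ∑ i, ∑ j, (ζ (a i) * η (a j)) • (s (b i) (b j) + s (b j) (b i)) := by
      have h1 : s (Tmap a b ζ) (Tmap a b η) =
          ∑ i, ∑ j, (ζ (a i) * η (a j)) • s (b i) (b j) := by
        simp only [Tmap, map_sum, LinearMap.sum_apply, LinearMap.map_smul,
          LinearMap.smul_apply, Finset.smul_sum, smul_smul]
        rw [Finset.sum_comm]
      have h2 : s (Tmap a b η) (Tmap a b ζ) =
          ∑ i, ∑ j, (ζ (a i) * η (a j)) • s (b j) (b i) := by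
        simp only [Tmap, map_sum, LinearMap.sum_apply, LinearMap.map_smul,
          LinearMap.smul_apply, Finset.smul_sum, smul_smul]
        exact Finset.sum_congr rfl fun i _ => Finset.sum_congr rfl fun j _ => by rw [mul_comm]
      rw [h1, h2]
      simp only [smul_add, Finset.sum_add_distrib]
    have hR2 : Tmap a b (-((s (Tmap a b ζ)).dualMap η) + -((s (Tmap a b η)).dualMap ζ)) =
        -∑ j, ∑ i, (ζ (a i) * η (s (b i) (a j))) • b j
          - ∑ j, ∑ i, (η (a i) * ζ (s (b i) (a j))) • b j := by
      simp [Tmap, map_sum, LinearMap.sum_apply, smul_smul, Finset.sum_smul, add_smul, neg_smul,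
        sub_eq_add_neg, Finset.sum_add_distrib, Finset.sum_neg_distrib]
    have hsk : ∀ j, ∑ i, ζ (s (b i) (a j)) * η (a i) = -∑ i, ζ (s (a i) (a j)) * η (b i) := by
      intro j
      simpa using skewsc hskew (ζ.comp (s.flip (a j))) η
    have hL2 : (∑ i, ∑ j, (ζ (s (a i) (a j)) * η (b i)) • b j) =
        -∑ j, ∑ i, (η (a i) * ζ (s (b i) (a j))) • b j := by
      rw [Finset.sum_comm, ← Finset.sum_neg_distrib]
      refine Finset.sum_congr rfl fun j _ => ?_
      rw [← Finset.sum_smul, ← Finset.sum_smul, ← neg_smul]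
      congr 1
      have h2 : ∑ i, ζ (s (a i) (a j)) * η (b i) = -∑ i, ζ (s (b i) (a j)) * η (a i) := by
        rw [hsk j, neg_neg]
      rw [h2]
      congr 1
      exact Finset.sum_congr rfl fun i _ => mul_comm _ _
    have hL1 : (∑ i, ∑ j, (ζ (a i) * η (s (b i) (a j))) • b j) =
        ∑ j, ∑ i, (ζ (a i) * η (s (b i) (a j))) • b j := Finset.sum_comm
    rw [hL, hR1, hR2, hL2, hL1]
    abel
  constructor
  · intro hD ζ η
    have h0 : ctr η (ctr ζ (TensorProduct.assoc k A A A ((∑ i, ∑ j, a i ⊗ₜ[k] (s (b i) (a j)) ⊗ₜ[k] b j) -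
        (∑ i, ∑ j, (s (a i) (a j)) ⊗ₜ[k] b i ⊗ₜ[k] b j) +
        (∑ i, ∑ j, a i ⊗ₜ[k] a j ⊗ₜ[k] (s (b i) (b j) + s (b j) (b i)))))) = 0 := by
      rw [hD]; simp
    rw [key ζ η] at h0
    exact sub_eq_zero.mp h0
  · intro hc
    apply (TensorProduct.assoc k A A A).map_eq_zero_iff.mp
    apply ctr_sep; intro ζ; apply ctr_sep; intro η
    rw [key ζ η, sub_eq_zero]
    exact hc ζ η

lemma cPart (c : A →ₗ[k] A →ₗ[k] A)
    (hskew : (∑ i, b i ⊗ₜ[k] a i) = -(∑ i, a i ⊗ₜ[k] b i)) :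
    ((∑ i, ∑ j, a i ⊗ₜ[k] (c (b i) (a j)) ⊗ₜ[k] b j) +
      (∑ i, ∑ j, (c (a i) (a j)) ⊗ₜ[k] b i ⊗ₜ[k] b j) -
      (∑ i, ∑ j, a i ⊗ₜ[k] a j ⊗ₜ[k] (c (b i) (b j) - c (b j) (b i))) = 0)
    ↔ ∀ ζ η : Module.Dual k A,
      c (Tmap a b ζ) (Tmap a b η) - c (Tmap a b η) (Tmap a b ζ) =
        Tmap a b ((c (Tmap a b ζ)).dualMap η - (c (Tmap a b η)).dualMap ζ) := by
  have key : ∀ ζ η : Module.Dual k A,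
      ctr η (ctr ζ (TensorProduct.assoc k A A A ((∑ i, ∑ j, a i ⊗ₜ[k] (c (b i) (a j)) ⊗ₜ[k] b j) +
        (∑ i, ∑ j, (c (a i) (a j)) ⊗ₜ[k] b i ⊗ₜ[k] b j) -
        (∑ i, ∑ j, a i ⊗ₜ[k] a j ⊗ₜ[k] (c (b i) (b j) - c (b j) (b i)))))) =
      Tmap a b ((c (Tmap a b ζ)).dualMap η - (c (Tmap a b η)).dualMap ζ) -
        (c (Tmap a b ζ) (Tmap a b η) - c (Tmap a b η) (Tmap a b ζ)) := by
    intro ζ η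
    have hL : ctr η (ctr ζ (TensorProduct.assoc k A A A ((∑ i, ∑ j, a i ⊗ₜ[k] (c (b i) (a j)) ⊗ₜ[k] b j) +
        (∑ i, ∑ j, (c (a i) (a j)) ⊗ₜ[k] b i ⊗ₜ[k] b j) -
        (∑ i, ∑ j, a i ⊗ₜ[k] a j ⊗ₜ[k] (c (b i) (b j) - c (b j) (b i)))))) =
        (∑ i, ∑ j, (ζ (a i) * η (c (b i) (a j))) • b j) +
        (∑ i, ∑ j, (ζ (c (a i) (a j)) * η (b i)) • b j) -
        (∑ i, ∑ j, (ζ (a i) * η (a j)) • (c (b i) (b j) - c (b j) (b i))) := by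
      simp only [map_sub, map_add, map_sum, TensorProduct.assoc_tmul, ctr_tmul, LinearMap.map_smul, smul_smul]
    have hR1 : c (Tmap a b ζ) (Tmap a b η) - c (Tmap a b η) (Tmap a b ζ) =
        ∑ i, ∑ j, (ζ (a i) * η (a j)) • (c (b i) (b j) - c (b j) (b i)) := by
      have h1 : c (Tmap a b ζ) (Tmap a b η) =
          ∑ i, ∑ j, (ζ (a i) * η (a j)) • c (b i) (b j) := by
        simp only [Tmap, map_sum, LinearMap.sum_apply, LinearMap.map_smul,
          LinearMap.smul_apply, Finset.smul_sum, smul_smul]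
        rw [Finset.sum_comm]
      have h2 : c (Tmap a b η) (Tmap a b ζ) =
          ∑ i, ∑ j, (ζ (a i) * η (a j)) • c (b j) (b i) := by
        simp only [Tmap, map_sum, LinearMap.sum_apply, LinearMap.map_smul,
          LinearMap.smul_apply, Finset.smul_sum, smul_smul]
        exact Finset.sum_congr rfl fun i _ => Finset.sum_congr rfl fun j _ => by rw [mul_comm]
      rw [h1, h2]
      simp only [smul_sub, Finset.sum_sub_distrib]
    have hR2 : Tmap a b ((c (Tmap a b ζ)).dualMap η - (c (Tmap a b η)).dualMap ζ) =
        ∑ j, ∑ i, (ζ (a i) * η (c (b i) (a j))) • b j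
          - ∑ j, ∑ i, (η (a i) * ζ (c (b i) (a j))) • b j := by
      simp [Tmap, map_sum, LinearMap.sum_apply, smul_smul, Finset.sum_smul, sub_smul, add_smul, neg_smul,
        sub_eq_add_neg, Finset.sum_add_distrib, Finset.sum_neg_distrib]
    have hsk : ∀ j, ∑ i, ζ (c (b i) (a j)) * η (a i) = -∑ i, ζ (c (a i) (a j)) * η (b i) := by
      intro j
      simpa using skewsc hskew (ζ.comp (c.flip (a j))) η
    have hL2 : (∑ i, ∑ j, (ζ (c (a i) (a j)) * η (b i)) • b j) =
        -∑ j, ∑ i, (η (a i) * ζ (c (b i) (a j))) • b j := by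
      rw [Finset.sum_comm, ← Finset.sum_neg_distrib]
      refine Finset.sum_congr rfl fun j _ => ?_
      rw [← Finset.sum_smul, ← Finset.sum_smul, ← neg_smul]
      congr 1
      have h2 : ∑ i, ζ (c (a i) (a j)) * η (b i) = -∑ i, ζ (c (b i) (a j)) * η (a i) := by
        rw [hsk j, neg_neg]
      rw [h2]
      congr 1
      exact Finset.sum_congr rfl fun i _ => mul_comm _ _
    have hL1 : (∑ i, ∑ j, (ζ (a i) * η (c (b i) (a j))) • b j) =
        ∑ j, ∑ i, (ζ (a i) * η (c (b i) (a j))) • b j := Finset.sum_comm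
    rw [hL, hR1, hR2, hL2, hL1]
    abel
  constructor
  · intro hD ζ η
    have h0 : ctr η (ctr ζ (TensorProduct.assoc k A A A ((∑ i, ∑ j, a i ⊗ₜ[k] (c (b i) (a j)) ⊗ₜ[k] b j) +
        (∑ i, ∑ j, (c (a i) (a j)) ⊗ₜ[k] b i ⊗ₜ[k] b j) -
        (∑ i, ∑ j, a i ⊗ₜ[k] a j ⊗ₜ[k] (c (b i) (b j) - c (b j) (b i)))))) = 0 := by
      rw [hD]; simp
    rw [key ζ η] at h0
    exact (sub_eq_zero.mp h0).symm
  · intro hc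
    apply (TensorProduct.assoc k A A A).map_eq_zero_iff.mp
    apply ctr_sep; intro ζ; apply ctr_sep; intro η
    rw [key ζ η, sub_eq_zero]
    exact (hc ζ η).symm
end Skew

/-- for a skew-symmetric `r = ∑ i, a i ⊗ b i` in an anti-pre-Poisson
algebra, `r` solves the APP-YBE (`D(r) = 0` and `S(r) = 0`) iff `T_r` is an
`O`-operator of the sub-adjacent Poisson algebra `(A, ⋆, [,])` associated to the
representation `(A*, L_∗*, -L_∘*)`. -/
theorem appYBE_iff_O_operator {k A ι : Type*} [Field k] [AddCommGroup A] [Module k A]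
    [Fintype ι] (s c : A →ₗ[k] A →ₗ[k] A) (h : IsAntiPrePoisson s c)
    (a b : ι → A)
    (hskew : (∑ i, b i ⊗ₜ[k] a i) = -(∑ i, a i ⊗ₜ[k] b i)) :
    ((∑ i, ∑ j, a i ⊗ₜ[k] (s (b i) (a j)) ⊗ₜ[k] b j) -
      (∑ i, ∑ j, (s (a i) (a j)) ⊗ₜ[k] b i ⊗ₜ[k] b j) +
      (∑ i, ∑ j, a i ⊗ₜ[k] a j ⊗ₜ[k] (s (b i) (b j) + s (b j) (b i))) = 0 ∧
     (∑ i, ∑ j, a i ⊗ₜ[k] (c (b i) (a j)) ⊗ₜ[k] b j) +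
      (∑ i, ∑ j, (c (a i) (a j)) ⊗ₜ[k] b i ⊗ₜ[k] b j) -
      (∑ i, ∑ j, a i ⊗ₜ[k] a j ⊗ₜ[k] (c (b i) (b j) - c (b j) (b i))) = 0)
    ↔ ∀ ζ η : Module.Dual k A,
      (s (Tmap a b ζ) (Tmap a b η) + s (Tmap a b η) (Tmap a b ζ) =
        Tmap a b (-((s (Tmap a b ζ)).dualMap η) + -((s (Tmap a b η)).dualMap ζ))) ∧
      (c (Tmap a b ζ) (Tmap a b η) - c (Tmap a b η) (Tmap a b ζ) =
        Tmap a b ((c (Tmap a b ζ)).dualMap η - (c (Tmap a b η)).dualMap ζ)) := by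
  constructor
  · rintro ⟨h1, h2⟩ ζ η
    exact ⟨(sPart s hskew).mp h1 ζ η, (cPart c hskew).mp h2 ζ η⟩
  · intro hq
    exact ⟨(sPart s hskew).mpr (fun ζ η => (hq ζ η).1),
      (cPart c hskew).mpr (fun ζ η => (hq ζ η).2)⟩
end

section
/- Let (A, ⋆, [,], P, ω) be a quadratic Rota–Baxter Poisson algebra of weight λ, and let (A, ∗, ∘) be the compatible anti-pre-Poisson algebra defined by ω(x∗y, z) = -ω(x, y⋆z) and ω(x∘y, z) = ω(y, [x,z]). Then P is a Rota–Baxter operator of weight λ on (A, ∗, ∘): P(x)∗P(y) = P(P(x)∗y + x∗P(y) + λ x∗y) and P(x)∘P(y) = P(P(x)∘y + x∘P(y) + λ x∘y) for all x, y ∈ A; hence (A, ∗, ∘, P, ω) is a quadratic Rota–Baxter anti-pre-Poisson algebra of weight λ. -/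
/-!
Both products are `ω`-duals of Rota–Baxter products: `x ∘ y` is dual to `[x, ·]`, and
`x ∗ y` is, after swapping the arguments, dual to `-(y ⋆ ·)`. Since `P` is skew-adjoint
for `ω` up to the weight, `-P - λ` is its `ω`-adjoint, and pairing the Rota–Baxter identity
of a product with `ω` turns it into the Rota–Baxter identity of the dual product; the
non-degeneracy of `ω` then removes the pairing.
-/

namespace LinearMap

variable {R A : Type*} [CommRing R] [AddCommGroup A] [Module R A]

def IsRotaBaxter (lam : R) (P : A →ₗ[R] A) (m : A →ₗ[R] A →ₗ[R] A) : Prop :=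
  ∀ x y : A, m (P x) (P y) = P (m (P x) y + m x (P y) + lam • m x y)

namespace IsRotaBaxter

variable {lam : R} {P : A →ₗ[R] A} {m : A →ₗ[R] A →ₗ[R] A}

theorem flip (h : IsRotaBaxter lam P m) : IsRotaBaxter lam P m.flip := fun x y => by
  simp only [flip_apply, h y x, add_comm (m (P y) x)]

theorem neg (h : IsRotaBaxter lam P m) : IsRotaBaxter lam P (-m) := fun x y => by
  simp only [neg_apply, h x y, smul_neg, ← neg_add, map_neg]

theorem of_dual {ω : A →ₗ[R] A →ₗ[R] R} {μ ν : A →ₗ[R] A →ₗ[R] A}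
    (hω : ω.SeparatingLeft) (hPω : ∀ x y : A, ω (P x) y + ω x (P y) + lam * ω x y = 0)
    (hμ : IsRotaBaxter lam P μ)
    (hν : ∀ x y z : A, ω (ν x y) z = ω y (μ x z)) : IsRotaBaxter lam P ν := by
  have hP : ∀ a b : A, ω (P a) b = -ω a (P b) - lam * ω a b := fun a b => by
    linear_combination hPω a b
  intro x y
  refine ker_eq_bot.mp (separatingLeft_iff_ker_eq_bot.mp hω) (ext fun z => ?_)
  -- after moving every `P` out of the first slot of `ω`, both sides are `ω y` of the same term
  simp only [map_add, map_smul, add_apply, smul_apply, smul_eq_mul, hν, hP, hμ x z]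
  ring

end IsRotaBaxter

end LinearMap

theorem quadratic_RB_poisson_to_antiPrePoisson_general {k A : Type*} [Field k] [AddCommGroup A]
    [Module k A]
    (st br : A →ₗ[k] A →ₗ[k] A)
    (ω : A →ₗ[k] A →ₗ[k] k)
    (hnondeg : ∀ x : A, (∀ y : A, ω x y = 0) → x = 0)
    (P : A →ₗ[k] A) (lam : k)
    (hPst : ∀ x y : A, st (P x) (P y) = P (st (P x) y + st x (P y) + lam • st x y))
    (hPbr : ∀ x y : A, br (P x) (P y) = P (br (P x) y + br x (P y) + lam • br x y))
    (hPω : ∀ x y : A, ω (P x) y + ω x (P y) + lam * ω x y = 0)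
    (s c : A →ₗ[k] A →ₗ[k] A)
    (hsdef : ∀ x y z : A, ω (s x y) z = - ω x (st y z))
    (hcdef : ∀ x y z : A, ω (c x y) z = ω y (br x z)) :
    (∀ x y : A, s (P x) (P y) = P (s (P x) y + s x (P y) + lam • s x y)) ∧
    (∀ x y : A, c (P x) (P y) = P (c (P x) y + c x (P y) + lam • c x y)) := by
  have hs : LinearMap.IsRotaBaxter lam P s.flip :=
    LinearMap.IsRotaBaxter.of_dual hnondeg hPω (LinearMap.IsRotaBaxter.neg hPst) fun x y z => by
      simp only [LinearMap.flip_apply, hsdef, LinearMap.neg_apply, map_neg]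
  exact ⟨hs.flip, LinearMap.IsRotaBaxter.of_dual hnondeg hPω hPbr hcdef⟩

/-- if `(A, ⋆, [,], P, ω)` is a quadratic Rota–Baxter Poisson algebra of
weight `λ` and `(∗, ∘)` is the compatible anti-pre-Poisson structure defined by
`ω(x∗y, z) = -ω(x, y⋆z)` and `ω(x∘y, z) = ω(y, [x,z])`, then `P` is a Rota–Baxter
operator of weight `λ` on `(A, ∗, ∘)`; hence `(A, ∗, ∘, P, ω)` is a quadratic
Rota–Baxter anti-pre-Poisson algebra of weight `λ`. -/
theorem quadratic_RB_poisson_to_antiPrePoisson {k A : Type*} [Field k] [AddCommGroup A]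
    [Module k A]
    (st br : A →ₗ[k] A →ₗ[k] A)
    (hcomm : ∀ x y : A, st x y = st y x)
    (hassoc : ∀ x y z : A, st (st x y) z = st x (st y z))
    (halt : ∀ x : A, br x x = 0)
    (hjac : ∀ x y z : A, br (br x y) z + br (br y z) x + br (br z x) y = 0)
    (hleib : ∀ x y z : A, br z (st x y) = st (br z x) y + st x (br z y))
    (ω : A →ₗ[k] A →ₗ[k] k)
    (hsym : ∀ x y : A, ω x y = ω y x)
    (hnondeg : ∀ x : A, (∀ y : A, ω x y = 0) → x = 0)
    (hconnes : ∀ x y z : A, ω (st x y) z + ω (st y z) x + ω (st z x) y = 0)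
    (hcocycle : ∀ x y z : A, ω (br x y) z + ω (br y z) x + ω (br z x) y = 0)
    (P : A →ₗ[k] A) (lam : k)
    (hPst : ∀ x y : A, st (P x) (P y) = P (st (P x) y + st x (P y) + lam • st x y))
    (hPbr : ∀ x y : A, br (P x) (P y) = P (br (P x) y + br x (P y) + lam • br x y))
    (hPω : ∀ x y : A, ω (P x) y + ω x (P y) + lam * ω x y = 0)
    (s c : A →ₗ[k] A →ₗ[k] A)
    (hsdef : ∀ x y z : A, ω (s x y) z = - ω x (st y z))
    (hcdef : ∀ x y z : A, ω (c x y) z = ω y (br x z)) :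
    (∀ x y : A, s (P x) (P y) = P (s (P x) y + s x (P y) + lam • s x y)) ∧
    (∀ x y : A, c (P x) (P y) = P (c (P x) y + c x (P y) + lam • c x y)) :=
  quadratic_RB_poisson_to_antiPrePoisson_general st br ω hnondeg P lam hPst hPbr hPω s c hsdef hcdef
end
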